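/- For a good fundamental domain F and any γ ∈ Γ with reduced word length at least 2 (i.e. γ ∉ {id, γ₁^{±1},…,γ_g^{±1}}), we have γF ∩ F = ∅. -/

import Mathlib

/-!
Ping-pong. A letter `γ i ^ (±1)` sends everything outside the open ball it repels into the
closed ball it attracts, and everything outside the closed ball it repels into the open ball
it attracts. Consecutive letters of a reduced word never cancel, so the closed ball attracted by
a letter misses the closed ball repelled by the letter before it. Hence, by induction, a reduced
word sends a point of `F` into the closed ball attracted by its first letter and, once it has
two letters, into the open one, which is disjoint from `F`.
-/

open Pointwise

namespace PingPong

variable {X G : Type*} [Group G] [MulAction G X] {g : ℕ}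

def letter (γ : Fin g → G) (q : Fin g × Bool) : G := if q.2 then γ q.1 else (γ q.1)⁻¹

/-- `ball B B' q` is the ball attracted by the letter `q`; swapping the families, `ball B' B q`
is the ball it repels. -/
def ball (B B' : Fin g → Set X) (q : Fin g × Bool) : Set X := if q.2 then B q.1 else B' q.1

def NoCancel (q q' : Fin g × Bool) : Prop := q.1 = q'.1 → q.2 = q'.2

lemma ball_subset_iUnion_union (B B' : Fin g → Set X) (q : Fin g × Bool) :
    ball B B' q ⊆ (⋃ i, B i) ∪ ⋃ i, B' i := by
  obtain ⟨i, _ | _⟩ := q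
  · exact Set.subset_union_of_subset_right (Set.subset_iUnion B' i) _
  · exact Set.subset_union_of_subset_left (Set.subset_iUnion B i) _

lemma ball_mono {B B' Bp B'p : Fin g → Set X} (hBsub : ∀ i, B i ⊆ Bp i)
    (hB'sub : ∀ i, B' i ⊆ B'p i) (q : Fin g × Bool) : ball B B' q ⊆ ball Bp B'p q := by
  obtain ⟨i, _ | _⟩ := q
  exacts [hB'sub i, hBsub i]

lemma disjoint_ball_of_noCancel {Bp B'p : Fin g → Set X}
    (hdisj1 : ∀ i j, i ≠ j → Disjoint (Bp i) (Bp j))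
    (hdisj2 : ∀ i j, i ≠ j → Disjoint (B'p i) (B'p j))
    (hdisj3 : ∀ i j, Disjoint (Bp i) (B'p j)) {q q' : Fin g × Bool} (h : NoCancel q q') :
    Disjoint (ball Bp B'p q') (ball B'p Bp q) := by
  obtain ⟨i, _ | _⟩ := q <;> obtain ⟨j, _ | _⟩ := q'
  · exact (hdisj3 i j).symm
  · exact hdisj1 j i fun hji => nomatch h hji.symm
  · exact hdisj2 j i fun hji => nomatch h hji.symm
  · exact hdisj3 j i

variable {γ : Fin g → G} {B B' Bp B'p : Fin g → Set X}

lemma letter_smul_compl_ball (hmap : ∀ i, γ i • (B' i)ᶜ = Bp i)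
    (hmap' : ∀ i, (γ i)⁻¹ • (B i)ᶜ = B'p i) (q : Fin g × Bool) :
    letter γ q • (ball B' B q)ᶜ = ball Bp B'p q := by
  obtain ⟨i, _ | _⟩ := q
  exacts [hmap' i, hmap i]

lemma letter_inv_smul_compl_ball (hmap : ∀ i, γ i • (B' i)ᶜ = Bp i)
    (hmap' : ∀ i, (γ i)⁻¹ • (B i)ᶜ = B'p i) (q : Fin g × Bool) :
    (letter γ q)⁻¹ • (ball B B' q)ᶜ = ball B'p Bp q := by
  obtain ⟨i, _ | _⟩ := q
  exacts [(inv_inv (γ i)).symm ▸ hmap i, hmap' i]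

lemma letter_smul_mem_ball_of_notMem_ball (hmap : ∀ i, γ i • (B' i)ᶜ = Bp i)
    (hmap' : ∀ i, (γ i)⁻¹ • (B i)ᶜ = B'p i) {q : Fin g × Bool} {x : X}
    (hx : x ∉ ball B'p Bp q) : letter γ q • x ∈ ball B B' q := by
  rwa [← letter_inv_smul_compl_ball hmap hmap', Set.mem_inv_smul_set_iff, Set.mem_compl_iff,
    not_not] at hx

/-- Definition 2.2, with `Bp i` and `B'p i` standing for the closed balls `B i⁺` and `B i'⁺`. -/
structure IsPingPong (γ : Fin g → G) (B B' Bp B'p : Fin g → Set X) : Prop where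
  subset : ∀ i, B i ⊆ Bp i
  subset' : ∀ i, B' i ⊆ B'p i
  pairwise_disjoint : ∀ i j, i ≠ j → Disjoint (Bp i) (Bp j)
  pairwise_disjoint' : ∀ i j, i ≠ j → Disjoint (B'p i) (B'p j)
  disjoint : ∀ i j, Disjoint (Bp i) (B'p j)
  smul_compl : ∀ i, γ i • (B' i)ᶜ = Bp i
  inv_smul_compl : ∀ i, (γ i)⁻¹ • (B i)ᶜ = B'p i

namespace IsPingPong

lemma letter_smul_mem_ball (h : IsPingPong γ B B' Bp B'p) {q q' : Fin g × Bool}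
    (hqq' : NoCancel q q') {x : X} (hx : x ∈ ball Bp B'p q') :
    letter γ q • x ∈ ball B B' q :=
  letter_smul_mem_ball_of_notMem_ball h.smul_compl h.inv_smul_compl <| Set.disjoint_left.1
    (disjoint_ball_of_noCancel h.pairwise_disjoint h.pairwise_disjoint' h.disjoint hqq') hx

lemma prod_smul_mem_ball (h : IsPingPong γ B B' Bp B'p) {b : X}
    (hb : ∀ q, b ∉ ball B' B q) :
    ∀ (q : Fin g × Bool) (t : List (Fin g × Bool)), (q :: t).IsChain NoCancel →
      ((q :: t).map (letter γ)).prod • b ∈ ball Bp B'p q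
  | q, [], _ => by
    rw [List.map_singleton, List.prod_singleton,
      ← letter_smul_compl_ball h.smul_compl h.inv_smul_compl q]
    exact Set.smul_mem_smul_set (Set.mem_compl (hb q))
  | q, q' :: t, hchain => by
    rw [List.isChain_cons_cons] at hchain
    rw [List.map_cons, List.prod_cons, mul_smul]
    exact ball_mono h.subset h.subset' q
      (h.letter_smul_mem_ball hchain.1 (h.prod_smul_mem_ball hb q' t hchain.2))

lemma prod_smul_mem_ball_of_cons_cons (h : IsPingPong γ B B' Bp B'p) {b : X}
    (hb : ∀ q, b ∉ ball B' B q) {q q' : Fin g × Bool} {t : List (Fin g × Bool)}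
    (hchain : (q :: q' :: t).IsChain NoCancel) :
    ((q :: q' :: t).map (letter γ)).prod • b ∈ ball B B' q := by
  rw [List.isChain_cons_cons] at hchain
  rw [List.map_cons, List.prod_cons, mul_smul]
  exact h.letter_smul_mem_ball hchain.1 (h.prod_smul_mem_ball hb q' t hchain.2)

end IsPingPong

end PingPong

/-- Theorem 2.6(3): for a good fundamental domain
`F = P¹ \ (B₁ ∪ … ∪ B_g ∪ B₁' ∪ … ∪ B_g')` and any `γ ∈ Γ` whose reduced word has
length at least `2` (i.e. `γ ∉ {id, γ₁^{±1}, …, γ_g^{±1}}`), we have `γF ∩ F = ∅`. -/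
theorem good_fundamental_domain_translate_disjoint {X : Type*} {G : Type*} [Group G]
    [MulAction G X] {g : ℕ} (γ : Fin g → G) (B B' Bp B'p : Fin g → Set X)
    (hBsub : ∀ i, B i ⊆ Bp i) (hB'sub : ∀ i, B' i ⊆ B'p i)
    (hdisj1 : ∀ i j, i ≠ j → Disjoint (Bp i) (Bp j))
    (hdisj2 : ∀ i j, i ≠ j → Disjoint (B'p i) (B'p j))
    (hdisj3 : ∀ i j, Disjoint (Bp i) (B'p j))
    (hmap : ∀ i, γ i • (B' i)ᶜ = Bp i)
    (hmap' : ∀ i, (γ i)⁻¹ • (B i)ᶜ = B'p i)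
    {k : ℕ} (hk : 2 ≤ k) (idx : Fin k → Fin g) (sgn : Fin k → Bool)
    (hred : ∀ (j : ℕ) (hj : j + 1 < k),
      idx ⟨j, by omega⟩ = idx ⟨j + 1, hj⟩ → sgn ⟨j, by omega⟩ = sgn ⟨j + 1, hj⟩) :
    ∀ b : X, b ∈ ((⋃ i, B i) ∪ ⋃ i, B' i)ᶜ →
      (List.ofFn fun j : Fin k => if sgn j then γ (idx j) else (γ (idx j))⁻¹).prod • b
        ∉ ((⋃ i, B i) ∪ ⋃ i, B' i)ᶜ := by
  open PingPong in
  intro b hb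
  have h : IsPingPong γ B B' Bp B'p := ⟨hBsub, hB'sub, hdisj1, hdisj2, hdisj3, hmap, hmap'⟩
  have hb' : ∀ q, b ∉ ball B' B q := fun q hq =>
    hb (Set.union_comm _ _ ▸ ball_subset_iUnion_union B' B q hq)
  have hchain : (List.ofFn fun j => (idx j, sgn j)).IsChain NoCancel :=
    List.isChain_iff_getElem.2 fun j hj => by
      simpa [NoCancel] using hred j (by simpa using hj)
  obtain ⟨n, rfl⟩ : ∃ n, k = n + 2 := ⟨k - 2, by omega⟩
  rw [List.ofFn_succ, List.ofFn_succ] at hchain ⊢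
  have hmem := h.prod_smul_mem_ball_of_cons_cons hb' hchain
  rw [List.map_cons, List.map_cons, List.map_ofFn] at hmem
  exact fun hF => hF (ball_subset_iUnion_union B B' _ hmem)
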